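/- arXiv:1907.10405 — 4 statements merged into one kernel-verified Lean document; each statement's English description precedes it below -/
import Mathlib

section
/- Let S → 𝒜 be a ring homomorphism of (commutative) Noetherian rings and 𝔞 an ideal of S such that I = 𝔞𝒜 is contained in the Jacobson radical of 𝒜. Let M and N be finite 𝒜-modules, and set Mₙ = M/I^{n+1}M and Nₙ = N/I^{n+1}N. If for every n there exists a surjective 𝒜-linear map φₙ : Mₙ → Nₙ, then there exists a surjective 𝒜-linear map ψ : M → N. -/
/-!
Fix a finite presentation of `M`; linear maps `M → N` are the solutions in `N` of its relations.
Lifting the images of the generators under `Mₖ → Nₖ` to `N` gives a family solving the relations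
modulo `I^(k+1) N`. By Artin–Rees, for `k` large enough such a family can be corrected by elements
of `I N` into an exact solution, that is, a map `ψ : M → N` agreeing with the given one modulo `I N`.
Then `ψ` is surjective modulo `I N`, hence surjective by Nakayama's lemma.
-/

open Submodule

section

variable {A : Type*} [CommRing A]

lemma Submodule.pi_univ_smul_top_le {N : Type*} [AddCommGroup N] [Module A N]
    {ι : Type*} [Finite ι] (I : Ideal A) :
    pi Set.univ (fun _ : ι => (I • ⊤ : Submodule A N)) ≤ I • ⊤ := by
  classical
  rw [← iSup_map_single]
  exact iSup_le fun i => map_le_iff_le_comap.mpr (smul_top_le_comap_smul_top I _)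

lemma LinearMap.exists_pow_succ_smul_top_inf_range_le [IsNoetherianRing A]
    {P Q : Type*} [AddCommGroup P] [Module A P] [AddCommGroup Q] [Module A Q] [Module.Finite A Q]
    (I : Ideal A) (T : P →ₗ[A] Q) :
    ∃ k : ℕ, (I ^ (k + 1) • ⊤ : Submodule A Q) ⊓ range T ≤ (I • ⊤ : Submodule A P).map T := by
  obtain ⟨k, hk⟩ := Ideal.exists_pow_inf_eq_pow_smul I (range T)
  refine ⟨k, ?_⟩
  rw [hk (k + 1) k.le_succ, Nat.add_sub_cancel_left, pow_one, map_smul'', Submodule.map_top]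
  exact smul_mono_right I inf_le_right

namespace Module.Relations

variable (relations : Relations A) (N : Type*) [AddCommGroup N] [Module A N]

noncomputable def evalRelations : (relations.G → N) →ₗ[A] (relations.R → N) :=
  LinearMap.pi fun r => (Finsupp.bilinearCombination A A).flip (relations.relation r)

variable {relations N}

@[simp]
lemma evalRelations_apply (u : relations.G → N) (r : relations.R) :
    relations.evalRelations N u r = Finsupp.linearCombination A u (relations.relation r) :=
  rfl

lemma exists_solution_sub_mem_smul_top [IsNoetherianRing A] [Module.Finite A N]
    [Finite relations.R] (I : Ideal A) :
    ∃ k : ℕ, ∀ u : relations.G → N,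
      (∀ r, Finsupp.linearCombination A u (relations.relation r) ∈
        (I ^ (k + 1) • ⊤ : Submodule A N)) →
      ∃ s : relations.Solution N, ∀ g, s.var g - u g ∈ (I • ⊤ : Submodule A N) := by
  obtain ⟨k, hk⟩ := (relations.evalRelations N).exists_pow_succ_smul_top_inf_range_le I
  refine ⟨k, fun u hu => ?_⟩
  obtain ⟨v, hv, hvu⟩ : relations.evalRelations N u ∈ (I • ⊤ : Submodule A _).map _ :=
    hk ⟨pi_univ_smul_top_le _ fun r _ => hu r, u, rfl⟩
  refine ⟨⟨u - v, fun r => ?_⟩, fun g => ?_⟩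
  · simpa [hvu] using congrFun (map_sub (relations.evalRelations N) u v) r
  · simpa using neg_mem (smul_top_le_comap_smul_top I (LinearMap.proj g) hv)

end Module.Relations

lemma exists_linearMap_mkQ_comp_eq_factor_comp [IsNoetherianRing A]
    {M N : Type*} [AddCommGroup M] [Module A M] [AddCommGroup N] [Module A N]
    [Module.Finite A M] [Module.Finite A N] (I : Ideal A) :
    ∃ k : ℕ, ∀ f : M →ₗ[A] N ⧸ (I ^ (k + 1) • ⊤ : Submodule A N), ∃ g : M →ₗ[A] N,
      (I • ⊤ : Submodule A N).mkQ ∘ₗ g =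
        factor (smul_mono_left (Ideal.pow_le_self k.add_one_ne_zero)) ∘ₗ f := by
  have := Module.finitePresentation_of_finite A M
  obtain ⟨pres, -, _⟩ := (Module.finitePresentation_iff_exists_presentation.{0, 0}).mp this
  obtain ⟨k, hk⟩ := pres.exists_solution_sub_mem_smul_top (N := N) I
  refine ⟨k, fun f => ?_⟩
  choose u hu using fun g => Submodule.Quotient.mk_surjective _ (f (pres.var g))
  have hu_rel (r : pres.R) :
      Finsupp.linearCombination A u (pres.relation r) ∈ (I ^ (k + 1) • ⊤ : Submodule A N) := by
    rw [← Quotient.mk_eq_zero, ← mkQ_apply, Finsupp.apply_linearCombination]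
    have hmk : (I ^ (k + 1) • ⊤ : Submodule A N).mkQ ∘ u = f ∘ pres.var := funext hu
    rw [hmk, ← Finsupp.apply_linearCombination, pres.linearCombination_var_relation, map_zero]
  obtain ⟨s, hs⟩ := hk u hu_rel
  refine ⟨pres.desc s,
    pres.postcomp_injective (Module.Relations.Solution.ext (funext fun g => ?_))⟩
  simpa [← hu, Submodule.Quotient.eq] using hs g

theorem stmt0_general
    (A : Type) [CommRing A] [IsNoetherianRing A]
    (I : Ideal A)
    (hJac : I ≤ (⊥ : Ideal A).jacobson)
    (M N : Type) [AddCommGroup M] [Module A M] [AddCommGroup N] [Module A N]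
    [Module.Finite A M] [Module.Finite A N]
    (hsurj : ∀ n : ℕ, ∃ φ : (M ⧸ (I ^ (n + 1) • ⊤ : Submodule A M)) →ₗ[A]
        (N ⧸ (I ^ (n + 1) • ⊤ : Submodule A N)), Function.Surjective φ) :
    ∃ ψ : M →ₗ[A] N, Function.Surjective ψ := by
  obtain ⟨k, hk⟩ := exists_linearMap_mkQ_comp_eq_factor_comp (M := M) (N := N) I
  obtain ⟨φ, hφ⟩ := hsurj k
  obtain ⟨ψ, hψ⟩ := hk (φ ∘ₗ mkQ _)
  refine ⟨ψ, ψ.surjective_of_surjective_comp_mkQ I hJac ?_⟩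
  rw [hψ, LinearMap.coe_comp, LinearMap.coe_comp]
  exact (factor_surjective _).comp (hφ.comp (mkQ_surjective _))

/-- Let `S → 𝒜` be a ring homomorphism of commutative Noetherian rings
and `𝔞` an ideal of `S` such that `I = 𝔞𝒜` is contained in the Jacobson radical of `𝒜`.
Let `M` and `N` be finite `𝒜`-modules, `Mₙ = M/I^{n+1}M`, `Nₙ = N/I^{n+1}N`.
If for every `n` there is a surjective `𝒜`-linear map `Mₙ → Nₙ`, then there is a
surjective `𝒜`-linear map `M → N`. -/
theorem stmt0
    (S A : Type) [CommRing S] [CommRing A] [IsNoetherianRing S] [IsNoetherianRing A]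
    [Algebra S A] (𝔞 : Ideal S)
    (I : Ideal A) (hI : I = Ideal.map (algebraMap S A) 𝔞)
    (hJac : I ≤ (⊥ : Ideal A).jacobson)
    (M N : Type) [AddCommGroup M] [Module A M] [AddCommGroup N] [Module A N]
    [Module.Finite A M] [Module.Finite A N]
    (hsurj : ∀ n : ℕ, ∃ φ : (M ⧸ (I ^ (n + 1) • ⊤ : Submodule A M)) →ₗ[A]
        (N ⧸ (I ^ (n + 1) • ⊤ : Submodule A N)), Function.Surjective φ) :
    ∃ ψ : M →ₗ[A] N, Function.Surjective ψ :=
  stmt0_general A I hJac M N hsurj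
end
end

section
/- Let S → 𝒜 be a ring homomorphism of Noetherian rings and 𝔞 an ideal of S such that I = 𝔞𝒜 lies in the Jacobson radical of 𝒜. Let M, N be finite 𝒜-modules with N flat over S. If for every n there is an 𝒜-linear isomorphism M/I^{n+1}M ≅ N/I^{n+1}N, then M ≅ N as 𝒜-modules. -/
open Function Submodule

section Aux

variable {A : Type} [CommRing A] {N : Type} [AddCommGroup N] [Module A N]

/-- If every component of a tuple lies in `J • ⊤`, the tuple lies in `J • ⊤` of the
pi module. -/
lemma aux_pi_mem_smul_top {ι : Type} [Fintype ι] [DecidableEq ι] (J : Ideal A)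
    (z : ι → N) (hz : ∀ j, z j ∈ (J • ⊤ : Submodule A N)) :
    z ∈ (J • ⊤ : Submodule A (ι → N)) := by
  rw [← Finset.univ_sum_single z]
  refine Submodule.sum_mem _ fun j _ => ?_
  have h1 : Pi.single j (z j) = LinearMap.single A (fun _ : ι => N) j (z j) := rfl
  have h2 : LinearMap.single A (fun _ : ι => N) j (z j) ∈
      (J • ⊤ : Submodule A N).map (LinearMap.single A (fun _ : ι => N) j) :=
    Submodule.mem_map_of_mem (hz j)
  rw [Submodule.map_smul''] at h2
  rw [h1]
  exact Submodule.smul_mono le_rfl le_top h2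

/-- If a linear map lies in `J • ⊤` of the hom module, all its values lie in `J • ⊤`. -/
lemma aux_apply_mem_smul_top {F : Type} [AddCommGroup F] [Module A F] (J : Ideal A)
    {w : F →ₗ[A] N} (hw : w ∈ (J • ⊤ : Submodule A (F →ₗ[A] N))) (x : F) :
    w x ∈ (J • ⊤ : Submodule A N) := by
  refine Submodule.smul_induction_on hw (fun a ha φ _ => ?_) (fun φ ψ hφ hψ => ?_)
  · rw [LinearMap.smul_apply]
    exact Submodule.smul_mem_smul ha trivial
  · rw [LinearMap.add_apply]
    exact add_mem hφ hψ

end Aux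

/-- Let `S → 𝒜` be a ring homomorphism of Noetherian rings and `𝔞` an
ideal of `S` such that `I = 𝔞𝒜` lies in the Jacobson radical of `𝒜`. Let `M, N` be
finite `𝒜`-modules with `N` flat over `S`. If for every `n` there is an `𝒜`-linear
isomorphism `M/I^{n+1}M ≅ N/I^{n+1}N`, then `M ≅ N` as `𝒜`-modules. -/
theorem stmt1
    (S A : Type) [CommRing S] [CommRing A] [IsNoetherianRing S] [IsNoetherianRing A]
    [Algebra S A] (𝔞 : Ideal S)
    (I : Ideal A) (hI : I = Ideal.map (algebraMap S A) 𝔞)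
    (hJac : I ≤ (⊥ : Ideal A).jacobson)
    (M N : Type) [AddCommGroup M] [Module A M] [AddCommGroup N] [Module A N]
    [Module.Finite A M] [Module.Finite A N]
    [Module S N] [IsScalarTower S A N] [Module.Flat S N]
    (hiso : ∀ n : ℕ, Nonempty ((M ⧸ (I ^ (n + 1) • ⊤ : Submodule A M)) ≃ₗ[A]
        (N ⧸ (I ^ (n + 1) • ⊤ : Submodule A N)))) :
    Nonempty (M ≃ₗ[A] N) := by
  classical
  -- a free presentation of M
  obtain ⟨q, π, hπ⟩ := Module.Finite.exists_fin' A M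
  have hKfg : (LinearMap.ker π).FG := IsNoetherian.noetherian _
  obtain ⟨t, ht⟩ := hKfg
  -- the "evaluation at the relations" map
  set u : ((Fin q → A) →ₗ[A] N) →ₗ[A] ((↥t) → N) :=
    LinearMap.pi (fun j => LinearMap.applyₗ (j : Fin q → A)) with hu
  -- Artin–Rees constant
  obtain ⟨c, hc⟩ := Ideal.exists_pow_inf_eq_pow_smul I (LinearMap.range u)
  -- the isomorphism mod I^(c+1)
  obtain ⟨e⟩ := hiso c
  set g : M →ₗ[A] (N ⧸ (I ^ (c + 1) • ⊤ : Submodule A N)) :=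
    e.toLinearMap ∘ₗ (I ^ (c + 1) • ⊤ : Submodule A M).mkQ with hg
  have hgsurj : Surjective g := by
    simpa [hg] using e.surjective.comp (Submodule.mkQ_surjective _)
  -- lift g ∘ π to a map h : (Fin q → A) → N
  set b := Pi.basisFun A (Fin q) with hb
  choose y hy using fun i =>
    Submodule.Quotient.mk_surjective (I ^ (c + 1) • ⊤ : Submodule A N) (g (π (b i)))
  set h : (Fin q → A) →ₗ[A] N := b.constr ℕ y with hh
  have hcomm : ∀ x : Fin q → A,
      Submodule.Quotient.mk (p := (I ^ (c + 1) • ⊤ : Submodule A N)) (h x) = g (π x) := by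
    intro x
    have : (I ^ (c + 1) • ⊤ : Submodule A N).mkQ ∘ₗ h = g ∘ₗ π := by
      refine b.ext fun i => ?_
      simp only [LinearMap.comp_apply, hh, Module.Basis.constr_basis]
      exact hy i
    simpa using LinearMap.congr_fun this x
  -- h sends relations into I^(c+1) N
  have hK : ∀ x ∈ LinearMap.ker π, h x ∈ (I ^ (c + 1) • ⊤ : Submodule A N) := by
    intro x hx
    have : Submodule.Quotient.mk (p := (I ^ (c + 1) • ⊤ : Submodule A N)) (h x) = 0 := by
      rw [hcomm x]
      rw [LinearMap.mem_ker] at hx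
      simp [hg, hx]
    exact (Submodule.Quotient.mk_eq_zero _).mp this
  -- Artin–Rees: correct h by an element w of I • Hom
  have hmem : u h ∈ (I ^ (c + 1) • ⊤ : Submodule A ((↥t) → N)) ⊓ LinearMap.range u := by
    constructor
    · refine aux_pi_mem_smul_top _ _ fun j => ?_
      refine hK _ ?_
      rw [← ht]
      exact Submodule.subset_span j.2
    · exact LinearMap.mem_range_self u h
  rw [hc (c + 1) (Nat.le_succ c)] at hmem
  have hmem2 : u h ∈ Submodule.map u ((I • ⊤ : Submodule A ((Fin q → A) →ₗ[A] N))) := by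
    rw [Submodule.map_smul'', Submodule.map_top]
    have : c + 1 - c = 1 := by omega
    rw [this, pow_one] at hmem
    exact Submodule.smul_mono le_rfl inf_le_right hmem
  obtain ⟨w, hwmem, hwu⟩ := hmem2
  have hw : ∀ x : Fin q → A, w x ∈ (I • ⊤ : Submodule A N) :=
    aux_apply_mem_smul_top I hwmem
  -- the corrected map kills the relations
  set h' : (Fin q → A) →ₗ[A] N := h - w with hh'
  have hker : LinearMap.ker π ≤ LinearMap.ker h' := by
    rw [← ht, Submodule.span_le]
    intro x hx
    have hwx : w x = h x := by
      have h3 := congr_fun hwu ⟨x, hx⟩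
      simpa [hu] using h3
    simp only [SetLike.mem_coe, LinearMap.mem_ker, hh', LinearMap.sub_apply]
    rw [hwx, sub_self]
  -- descend to f : M → N
  set eq := π.quotKerEquivOfSurjective hπ with heq
  set f : M →ₗ[A] N := ((LinearMap.ker π).liftQ h' hker) ∘ₗ eq.symm.toLinearMap with hf
  have heqmk : ∀ x : Fin q → A, eq (Submodule.Quotient.mk x) = π x := by
    intro x
    simp [heq, LinearMap.quotKerEquivOfSurjective]
  have hfπ : ∀ x : Fin q → A, f (π x) = h' x := by
    intro x
    have h1 : eq.symm (π x) = Submodule.Quotient.mk x := by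
      apply eq.injective
      rw [LinearEquiv.apply_symm_apply, heqmk]
    simp [hf, h1]
  -- f is surjective (Nakayama)
  have hIpow_le : (I ^ (c + 1) • ⊤ : Submodule A N) ≤ (I • ⊤ : Submodule A N) :=
    Submodule.smul_mono_left (Ideal.pow_le_self (Nat.succ_ne_zero c))
  have hsup : (⊤ : Submodule A N) ≤ LinearMap.range f ⊔ I • (⊤ : Submodule A N) := by
    intro y _
    obtain ⟨m, hm⟩ := hgsurj (Submodule.Quotient.mk y)
    obtain ⟨x, hx⟩ := hπ m
    have h4 : h x - y ∈ (I ^ (c + 1) • ⊤ : Submodule A N) := by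
      refine (Submodule.Quotient.eq _).mp ?_
      rw [hcomm x, hx, hm]
    have h5 : f m = h x - w x := by
      rw [← hx, hfπ x, hh', LinearMap.sub_apply]
    refine Submodule.mem_sup.mpr ⟨f m, LinearMap.mem_range_self f m,
      w x - (h x - y), ?_, by rw [h5]; abel⟩
    exact sub_mem (hw x) (hIpow_le h4)
  have hfsurj : Surjective f := by
    rw [← LinearMap.range_eq_top]
    have hfg : (⊤ : Submodule A N).FG := Module.Finite.fg_top (R := A) (M := N)
    exact top_le_iff.mp (Submodule.le_of_le_smul_of_le_jacobson_bot hfg hJac hsup)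
  -- f is injective
  have hker_le : ∀ n : ℕ, LinearMap.ker f ≤ (I ^ (n + 1) • ⊤ : Submodule A M) := by
    intro n
    obtain ⟨en⟩ := hiso n
    have hle : (I ^ (n + 1) • ⊤ : Submodule A M) ≤
        Submodule.comap f (I ^ (n + 1) • ⊤ : Submodule A N) := by
      rw [← Submodule.map_le_iff_le_comap, Submodule.map_smul'']
      exact Submodule.smul_mono le_rfl le_top
    set fbar := Submodule.mapQ (I ^ (n + 1) • ⊤ : Submodule A M)
      (I ^ (n + 1) • ⊤ : Submodule A N) f hle with hfbar
    have hfbar_surj : Surjective fbar := by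
      intro z
      obtain ⟨yy, rfl⟩ := Submodule.mkQ_surjective _ z
      obtain ⟨m, rfl⟩ := hfsurj yy
      exact ⟨Submodule.Quotient.mk m, by simp [hfbar, Submodule.mapQ_apply]⟩
    set endo := en.symm.toLinearMap ∘ₗ fbar with hendo
    haveI : Module.Finite A (M ⧸ (I ^ (n + 1) • ⊤ : Submodule A M)) :=
      Module.Finite.of_surjective (Submodule.mkQ _) (Submodule.mkQ_surjective _)
    have hendo_surj : Surjective endo := by
      simpa [hendo] using en.symm.surjective.comp hfbar_surj
    have hendo_inj := OrzechProperty.injective_of_surjective_endomorphism endo hendo_surj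
    intro x hx
    have h6 : endo (Submodule.Quotient.mk x) = endo 0 := by
      have : f x = 0 := LinearMap.mem_ker.mp hx
      simp [hendo, hfbar, Submodule.mapQ_apply, this]
    have h7 := hendo_inj h6
    exact (Submodule.Quotient.mk_eq_zero _).mp h7
  have hfinj : Injective f := by
    rw [← LinearMap.ker_eq_bot]
    refine (Submodule.eq_bot_iff _).mpr fun x hx => ?_
    have hx_mem : x ∈ (⨅ i : ℕ, I ^ i • ⊤ : Submodule A M) := by
      rw [Submodule.mem_iInf]
      intro i
      cases i with
      | zero => simp
      | succ k => exact hker_le k hx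
    rw [Ideal.mem_iInf_smul_pow_eq_bot_iff] at hx_mem
    obtain ⟨r, hr⟩ := hx_mem
    have hunit : IsUnit ((1 : A) - (r : A)) := by
      have := Ideal.mem_jacobson_bot.mp (hJac r.2) (-1)
      have h8 : (r : A) * (-1) + 1 = 1 - (r : A) := by ring
      rwa [h8] at this
    obtain ⟨v, hv⟩ := hunit
    have h9 : (v : A) • x = 0 := by
      rw [hv, sub_smul, one_smul, hr, sub_self]
    calc x = ((↑v⁻¹ * ↑v : A)) • x := by simp
    _ = (↑v⁻¹ : A) • ((v : A) • x) := by rw [mul_smul]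
    _ = 0 := by rw [h9, smul_zero]
  exact ⟨LinearEquiv.ofBijective f ⟨hfinj, hfsurj⟩⟩
end

section
/- Let 0 → J → B' → B → 0 be a square-zero extension of commutative rings (J² = 0) and N a B-module. If there exists a lifting of N along q : B' → B (i.e., a B'-module N' with a surjection α : N' → N whose kernel is isomorphic to N ⊗_B J via the natural map), then the 4-term exact sequence 0 → N ⊗_B J → N̄₁' → F̄₀ → N → 0, obtained by tensoring a B'-free presentation 0 → N₁' → F₀ → N → 0 of N with B, represents the zero class in Ext²_B(N, N ⊗_B J). -/
/-!
Tor-vanishing for the lifting `N'` makes `N' ⊗ J → N'` injective. Lifting `ε` through the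
reduction `N' → N` gives `φ : F₀ → N'`, onto by Nakayama for the square-zero ideal `J`. Then
`N₁' = ker ε = J F₀ + ker φ`, and injectivity of `N' ⊗ J → N'` gives `ker φ ∩ J F₀ ⊆ J ker φ`,
so the image of `ker φ` in `N̄₁'` is a complement of `T = ker (N̄₁' → F̄₀) = J F₀ / J N₁'`.
A retraction `σ : N̄₁' → T` then trivialises the class: take `Z = T × F̄₀` and `g = (σ, ῑ)`.
-/

open CategoryTheory Limits TensorProduct Function

namespace CategoryTheory

variable {C : Type*} [Category* C] [Abelian C] [EnoughProjectives C]

lemma Projective.d_comp {X Y : C} (g : X ⟶ Y) : Projective.d g ≫ g = 0 := by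
  show (Projective.π _ ≫ kernel.ι g) ≫ g = 0
  simp

namespace ProjectiveResolution

noncomputable def ofPresentationComplex {P₁ P₀ : C} (f : P₁ ⟶ P₀) : ChainComplex C ℕ :=
  ChainComplex.mk' P₀ P₁ f fun g => ⟨Projective.syzygies g, Projective.d g, Projective.d_comp g⟩

lemma ofPresentationComplex_d_1_0 {P₁ P₀ : C} (f : P₁ ⟶ P₀) :
    (ofPresentationComplex f).d 1 0 = f := by
  simp [ofPresentationComplex]

lemma exact_of_iso_syzygies {X Y Z : C} (g : Y ⟶ Z) (e : X ≅ Projective.syzygies g) (f : X ⟶ Y)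
    (hf : f = e.hom ≫ Projective.d g) (w : f ≫ g = 0) : (ShortComplex.mk f g w).Exact := by
  subst hf
  let α : ShortComplex.mk _ g w ⟶ ShortComplex.mk (Projective.d g) g (Projective.d_comp g) :=
    { τ₁ := e.hom
      τ₂ := 𝟙 _
      τ₃ := 𝟙 _ }
  rw [ShortComplex.exact_iff_of_epi_of_isIso_of_mono α]
  exact exact_d_f g

lemma ofPresentationComplex_exactAt_succ {P₁ P₀ : C} (f : P₁ ⟶ P₀) (n : ℕ) :
    (ofPresentationComplex f).ExactAt (n + 1) := by
  rw [HomologicalComplex.exactAt_iff' _ (n + 1 + 1) (n + 1) n (by simp) (by simp)]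
  exact exact_of_iso_syzygies _ (ChainComplex.mk'XIso _ _ _ _ n) _ (ChainComplex.mk'_d _ _ _ _ n) _

instance {P₁ P₀ : C} [Projective P₁] [Projective P₀] (f : P₁ ⟶ P₀) (n : ℕ) :
    Projective ((ofPresentationComplex f).X n) := by
  obtain (_ | _ | _ | n) := n
  · assumption
  · assumption
  all_goals apply Projective.projective_over

noncomputable def ofPresentation {X P₁ P₀ : C} [Projective P₁] [Projective P₀] (f : P₁ ⟶ P₀)
    (π : P₀ ⟶ X) (w : f ≫ π = 0) (hexact : (ShortComplex.mk f π w).Exact) [Epi π] :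
    ProjectiveResolution X where
  complex := ofPresentationComplex f
  π := (ChainComplex.toSingle₀Equiv _ _).symm ⟨π, by rw [ofPresentationComplex_d_1_0]; exact w⟩
  quasiIso := ⟨fun n => by
    cases n with
    | zero =>
      rw [ChainComplex.quasiIsoAt₀_iff, ShortComplex.quasiIso_iff_of_zeros']
      · refine (ShortComplex.exact_and_epi_g_iff_of_iso (S₂ := ShortComplex.mk f π w) ?_).2
          ⟨hexact, ‹_›⟩
        exact ShortComplex.isoMk (Iso.refl _) (Iso.refl _) (Iso.refl _)
          (by erw [Category.id_comp, Category.comp_id]; exact (ofPresentationComplex_d_1_0 f).symm)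
          (by erw [Category.id_comp, Category.comp_id]
              exact (ChainComplex.toSingle₀Equiv_symm_apply_f_zero (C := ofPresentationComplex f)
                π (by rw [ofPresentationComplex_d_1_0]; exact w)).symm)
      all_goals rfl
    | succ n =>
      rw [quasiIsoAt_iff_exactAt']
      · apply ofPresentationComplex_exactAt_succ
      · apply ChainComplex.exactAt_succ_single_obj⟩

lemma ofPresentation_complex_d_1_0 {X P₁ P₀ : C} [Projective P₁] [Projective P₀] (f : P₁ ⟶ P₀)
    (π : P₀ ⟶ X) (w : f ≫ π = 0) (hexact : (ShortComplex.mk f π w).Exact) [Epi π] :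
    (ofPresentation f π w hexact).complex.d 1 0 = f :=
  ofPresentationComplex_d_1_0 f

end ProjectiveResolution

end CategoryTheory

theorem LinearMap.lTensor_injective_of_exact {R : Type*} [CommRing R] (M : Type*)
    {P₂ P₁ K P₀ : Type*}
    [AddCommGroup M] [AddCommGroup P₂] [AddCommGroup P₁] [AddCommGroup K] [AddCommGroup P₀]
    [Module R M] [Module R P₂] [Module R P₁] [Module R K] [Module R P₀]
    (d : P₂ →ₗ[R] P₁) (g : P₁ →ₗ[R] K) (i : K →ₗ[R] P₀) (hg : Surjective g) (hgd : g ∘ₗ d = 0)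
    (hexact : Exact (d.lTensor M) ((i ∘ₗ g).lTensor M)) : Injective (i.lTensor M) := by
  refine (injective_iff_map_eq_zero _).2 fun t ht => ?_
  obtain ⟨z, rfl⟩ := g.lTensor_surjective M hg t
  obtain ⟨w, rfl⟩ := (hexact z).1 (by rwa [lTensor_comp_apply])
  rw [← lTensor_comp_apply, hgd, lTensor_zero, LinearMap.zero_apply]

namespace ModuleCat

variable {R : Type} [CommRing R]

theorem exact_lTensor_of_subsingleton_tor (M : ModuleCat R) {X : ModuleCat R}
    (P : ProjectiveResolution X) (h : Subsingleton (((Tor (ModuleCat R) 1).obj M).obj X)) :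
    Exact ((P.complex.d 2 1).hom.lTensor M) ((P.complex.d 1 0).hom.lTensor M) := by
  let T := ((MonoidalCategory.tensorLeft M).mapHomologicalComplex _).obj P.complex
  have hT : T.ExactAt 1 := by
    rw [HomologicalComplex.exactAt_iff_isZero_homology]
    exact (@isZero_of_subsingleton _ _ _ h).of_iso (P.isoLeftDerivedObj _ 1).symm
  rw [HomologicalComplex.exactAt_iff' _ 2 1 0 (by simp) (by simp),
    ShortComplex.moduleCat_exact_iff_range_eq_ker] at hT
  exact LinearMap.exact_iff.2 hT.symm

end ModuleCat

/-- `Tor₁(M, X)` is computed from a projective resolution of `X` beginning with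
`(K →₀ R) → P → X`. -/
theorem Module.lTensor_injective_of_subsingleton_tor {R : Type} [CommRing R] (M : Type)
    {K P X : Type} [AddCommGroup M] [AddCommGroup K] [AddCommGroup P] [AddCommGroup X]
    [Module R M] [Module R K] [Module R P] [Module R X] [Module.Projective R P]
    {i : K →ₗ[R] P} {π : P →ₗ[R] X} (hi : Function.Injective i) (hexact : Exact i π)
    (hπ : Surjective π)
    (htor : Subsingleton (((Tor (ModuleCat R) 1).obj (ModuleCat.of R M)).obj (ModuleCat.of R X))) :
    Function.Injective (i.lTensor M) := by
  let g : (K →₀ R) →ₗ[R] K := Finsupp.linearCombination R id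
  have hg : Surjective g := Finsupp.linearCombination_id_surjective R K
  let f := ModuleCat.ofHom (i ∘ₗ g)
  have w : f ≫ ModuleCat.ofHom π = 0 :=
    ModuleCat.hom_ext (LinearMap.ext fun x => hexact.apply_apply_eq_zero (g x))
  have hfπ : (ShortComplex.mk f (ModuleCat.ofHom π) w).Exact := by
    rw [ShortComplex.moduleCat_exact_iff_range_eq_ker]
    exact (LinearMap.range_comp_of_range_eq_top i (LinearMap.range_eq_top.2 hg)).trans
      (LinearMap.exact_iff.1 hexact).symm
  have : Epi (ModuleCat.ofHom π) := (ModuleCat.epi_iff_surjective _).2 hπ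
  let res := ProjectiveResolution.ofPresentation f _ w hfπ
  have hd := ProjectiveResolution.ofPresentation_complex_d_1_0 f _ w hfπ
  have hgd : g ∘ₗ (res.complex.d 2 1).hom = 0 := by
    refine LinearMap.ext fun x => hi ?_
    have := congr($(res.complex.d_comp_d 2 1 0).hom x)
    rw [hd] at this
    exact this.trans (map_zero i).symm
  refine LinearMap.lTensor_injective_of_exact M _ g i hg hgd ?_
  have := ModuleCat.exact_lTensor_of_subsingleton_tor (ModuleCat.of R M) res htor
  rwa [hd] at this

namespace Ideal

variable {R : Type*} [CommRing R] (I : Ideal R) {M M' : Type*} [AddCommGroup M] [Module R M]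
  [AddCommGroup M'] [Module R M']

variable (M) in
noncomputable def tensorSMul : M ⊗[R] I →ₗ[R] M :=
  TensorProduct.rid R M ∘ₗ I.subtype.lTensor M

@[simp]
lemma tensorSMul_tmul (m : M) (c : I) : I.tensorSMul M (m ⊗ₜ c) = (c : R) • m := by
  simp [tensorSMul]

variable (M) in
lemma range_tensorSMul : LinearMap.range (I.tensorSMul M) = I • ⊤ := by
  refine le_antisymm ?_ (Submodule.smul_le.2 fun c hc m _ => ⟨m ⊗ₜ ⟨c, hc⟩, by simp⟩)
  rintro _ ⟨t, rfl⟩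
  induction t using TensorProduct.induction_on with
  | zero => simp
  | tmul m c => simpa using Submodule.smul_mem_smul c.2 Submodule.mem_top
  | add x y hx hy => rw [map_add]; exact add_mem hx hy

lemma tensorSMul_comp_rTensor (f : M →ₗ[R] M') :
    I.tensorSMul M' ∘ₗ f.rTensor I = f ∘ₗ I.tensorSMul M :=
  TensorProduct.ext' fun m c => by simp

end Ideal

namespace Submodule

variable {R M : Type*} [CommRing R] [AddCommGroup M] [Module R M] {I : Ideal R}

theorem eq_top_of_sup_smul_top_eq_top (hI : I * I = ⊥) {N : Submodule R M}
    (h : N ⊔ I • ⊤ = ⊤) : N = ⊤ := by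
  have hle : I • (⊤ : Submodule R M) ≤ N :=
    calc I • (⊤ : Submodule R M) = I • N ⊔ (I * I) • ⊤ := by
          conv_lhs => rw [← h]
          rw [smul_sup, Submodule.mul_smul]
      _ = I • N := by rw [hI, bot_smul, sup_bot_eq]
      _ ≤ N := smul_le_right
  rw [eq_top_iff, ← h]
  exact sup_le le_rfl hle

end Submodule

section

variable {R : Type*} [CommRing R] {I : Ideal R} {F M N : Type*} [AddCommGroup F] [Module R F]
  [AddCommGroup M] [Module R M] [AddCommGroup N] [Module R N]

theorem TensorProduct.exists_surjective_ker_eq_smul_top (e : M ⊗[R] (R ⧸ I) ≃ₗ[R] N) :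
    ∃ ρ : M →ₗ[R] N, Surjective ρ ∧ LinearMap.ker ρ = I • ⊤ :=
  ⟨e.toLinearMap ∘ₗ (tensorQuotEquivQuotSMul M I).symm.toLinearMap ∘ₗ
      (I • ⊤ : Submodule R M).mkQ,
    by simpa using (I • ⊤ : Submodule R M).mkQ_surjective,
    by simp only [LinearEquiv.ker_comp, Submodule.ker_mkQ]⟩

theorem LinearMap.exists_surjective_lift_of_ker_eq_smul_top [Module.Projective R F]
    (hI : I * I = ⊥) {ρ : M →ₗ[R] N} (hρ : Surjective ρ) (hker : LinearMap.ker ρ = I • ⊤)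
    {ε : F →ₗ[R] N} (hε : Surjective ε) : ∃ φ : F →ₗ[R] M, Surjective φ ∧ ρ ∘ₗ φ = ε := by
  obtain ⟨φ, hφ⟩ := Module.projective_lifting_property ρ ε hρ
  refine ⟨φ, LinearMap.range_eq_top.1 (Submodule.eq_top_of_sup_smul_top_eq_top hI ?_), hφ⟩
  rw [← hker, ← Submodule.comap_map_eq, ← LinearMap.range_comp, hφ, LinearMap.range_eq_top.2 hε,
    Submodule.comap_top]

theorem LinearMap.ker_inf_smul_top_le_smul_ker {φ : F →ₗ[R] M} (hφ : Surjective φ)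
    (hM : Injective (I.subtype.lTensor M)) : LinearMap.ker φ ⊓ I • ⊤ ≤ I • LinearMap.ker φ := by
  replace hM : Injective (I.tensorSMul M) := by simpa [Ideal.tensorSMul] using hM
  rintro y ⟨hy, hyI⟩
  rw [← I.range_tensorSMul] at hyI
  obtain ⟨u, rfl⟩ := hyI
  have hu : φ.rTensor I u = 0 := hM <| by
    rw [← LinearMap.comp_apply, I.tensorSMul_comp_rTensor, LinearMap.comp_apply, hy, map_zero]
  obtain ⟨v, rfl⟩ := (rTensor_exact I (LinearMap.exact_subtype_ker_map φ) hφ u).1 hu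
  rw [← LinearMap.comp_apply, I.tensorSMul_comp_rTensor, LinearMap.comp_apply]
  have hv : I.tensorSMul (LinearMap.ker φ) v ∈ (I • ⊤ : Submodule R (LinearMap.ker φ)) :=
    I.range_tensorSMul (LinearMap.ker φ) ▸ LinearMap.mem_range_self _ v
  simpa [Submodule.map_smul''] using Submodule.mem_map_of_mem (f := (LinearMap.ker φ).subtype) hv

end

namespace Submodule

variable {R F : Type*} [CommRing R] [AddCommGroup F] [Module R F] {I : Ideal R}

lemma mem_smul_top_of_coe_mem_smul {K L : Submodule R F} (hLK : L ≤ K) {y : K}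
    (hy : (y : F) ∈ I • L) : y ∈ (I • ⊤ : Submodule R K) := by
  have hle : I • L ≤ (I • ⊤ : Submodule R K).map K.subtype := by
    rw [map_smul'', map_subtype_top]
    exact smul_mono_right I hLK
  obtain ⟨z, hz, hzy⟩ := hle hy
  rwa [← Subtype.ext hzy]

noncomputable def subtypeQuotSMulTop (K : Submodule R F) (J : Ideal R) :
    K ⧸ (J • ⊤ : Submodule R K) →ₗ[R] F ⧸ (J • ⊤ : Submodule R F) :=
  (J • ⊤ : Submodule R K).mapQ (J • ⊤) K.subtype (smul_top_le_comap_smul_top J _)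

lemma mk_mem_ker_subtypeQuotSMulTop_iff {K : Submodule R F} (y : K) :
    Quotient.mk y ∈ LinearMap.ker (K.subtypeQuotSMulTop I) ↔ (y : F) ∈ (I • ⊤ : Submodule R F) := by
  rw [LinearMap.mem_ker, subtypeQuotSMulTop, mapQ_apply, Quotient.mk_eq_zero, subtype_apply]

theorem isCompl_ker_subtypeQuotSMulTop {K L : Submodule R F} (hL : L ⊓ I • ⊤ ≤ I • L)
    (hK : K = I • ⊤ ⊔ L) :
    IsCompl (LinearMap.ker (K.subtypeQuotSMulTop I))
      ((L.comap K.subtype).map (I • ⊤ : Submodule R K).mkQ) := by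
  subst hK
  constructor
  · rw [disjoint_def]
    rintro _ hker ⟨l, hl, rfl⟩
    rw [mkQ_apply, mk_mem_ker_subtypeQuotSMulTop_iff] at hker
    exact (Quotient.mk_eq_zero _).2 (mem_smul_top_of_coe_mem_smul le_sup_right (hL ⟨hl, hker⟩))
  · rw [codisjoint_iff, eq_top_iff]
    rintro x -
    obtain ⟨⟨y, hy⟩, rfl⟩ := Quotient.mk_surjective _ x
    obtain ⟨a, ha, b, hb, rfl⟩ := mem_sup.1 hy
    have hsplit : (⟨a + b, hy⟩ : ↥(I • ⊤ ⊔ L)) = ⟨a, mem_sup_left ha⟩ + ⟨b, mem_sup_right hb⟩ :=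
      rfl
    rw [hsplit, Quotient.mk_add]
    exact add_mem_sup ((mk_mem_ker_subtypeQuotSMulTop_iff _).2 ha) (mem_map_of_mem hb)

end Submodule

theorem exists_extension_of_retraction {R : Type*} [CommRing R] {I : Ideal R} {Q P : Type}
    [AddCommGroup Q] [Module R Q] [AddCommGroup P] [Module R P] (ι : Q →ₗ[R] P)
    (σ : Q →ₗ[R] LinearMap.ker ι) (hσ : ∀ x : LinearMap.ker ι, σ x = x)
    (hQ : Module.IsTorsionBySet R Q I) (hP : Module.IsTorsionBySet R P I) :
    ∃ (Z : Type) (_ : AddCommGroup Z) (_ : Module R Z) (j : LinearMap.ker ι →ₗ[R] Z)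
      (p : Z →ₗ[R] P) (g : Q →ₗ[R] Z),
      (∀ c ∈ I, ∀ z : Z, c • z = 0) ∧ Injective j ∧ Surjective p ∧
      LinearMap.range j = LinearMap.ker p ∧ p ∘ₗ g = ι ∧ g ∘ₗ (LinearMap.ker ι).subtype = j := by
  refine ⟨LinearMap.ker ι × P, inferInstance, inferInstance, LinearMap.inl R _ _,
    LinearMap.snd R _ _, σ.prod ι, fun c hc z => ?_, LinearMap.inl_injective,
    LinearMap.snd_surjective, LinearMap.range_inl R _ _, LinearMap.snd_prod σ ι,
    LinearMap.ext fun x => Prod.ext (hσ x) x.2⟩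
  exact Prod.ext (Subtype.ext (hQ (a := ⟨c, hc⟩))) (hP (a := ⟨c, hc⟩))

theorem stmt3_general
    (B' : Type) [CommRing B'] (J : Ideal B') (hJ : J * J = ⊥)
    (N : Type) [AddCommGroup N] [Module B' N]
    (F₀ : Type) [AddCommGroup F₀] [Module B' F₀] [Module.Free B' F₀]
    (ε : F₀ →ₗ[B'] N) (hε : Surjective ε)
    -- the reduction mod `J` of the inclusion `N₁' = ker ε ⊆ F₀` and of `ε`
    (ιbar : ((LinearMap.ker ε) ⧸ (J • ⊤ : Submodule B' (LinearMap.ker ε))) →ₗ[B']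
      (F₀ ⧸ (J • ⊤ : Submodule B' F₀)))
    (hιbar : ∀ x : LinearMap.ker ε,
      ιbar (Submodule.Quotient.mk x) = Submodule.Quotient.mk (x : F₀))
    -- existence of a lifting of `N` along `B' → B' ⧸ J`
    (hlift : ∃ (N'' : Type) (_ : AddCommGroup N'') (_ : Module B' N''),
      Nonempty ((N'' ⊗[B'] (B' ⧸ J)) ≃ₗ[B'] N) ∧
      Subsingleton (((Tor (ModuleCat B') 1).obj (ModuleCat.of B' N'')).obj
        (ModuleCat.of B' (B' ⧸ J)))) :
    -- the 2-fold extension class `ob(q, N)` vanishes: the extension of `im ιbar` by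
    -- `T = ker ιbar` given by `N̄₁'` extends to an extension `Z` of `F̄₀` by `T`,
    -- in the category of `B`-modules
    ∃ (Z : Type) (_ : AddCommGroup Z) (_ : Module B' Z)
      (j : (LinearMap.ker ιbar) →ₗ[B'] Z)
      (p : Z →ₗ[B'] (F₀ ⧸ (J • ⊤ : Submodule B' F₀)))
      (g : ((LinearMap.ker ε) ⧸ (J • ⊤ : Submodule B' (LinearMap.ker ε))) →ₗ[B'] Z),
      (∀ c ∈ J, ∀ z : Z, c • z = 0) ∧
      Injective j ∧ Surjective p ∧ LinearMap.range j = LinearMap.ker p ∧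
      p.comp g = ιbar ∧ g.comp (LinearMap.ker ιbar).subtype = j := by
  obtain ⟨N', _, _, ⟨e⟩, htor⟩ := hlift
  have hN' : Injective (J.subtype.lTensor N') := Module.lTensor_injective_of_subsingleton_tor N'
    J.injective_subtype (LinearMap.exact_subtype_mkQ J) J.mkQ_surjective htor
  obtain ⟨ρ, hρ, hkerρ⟩ := TensorProduct.exists_surjective_ker_eq_smul_top e
  obtain ⟨φ, hφ, rfl⟩ := LinearMap.exists_surjective_lift_of_ker_eq_smul_top hJ hρ hkerρ hε
  have hK : LinearMap.ker (ρ ∘ₗ φ) = J • ⊤ ⊔ LinearMap.ker φ := by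
    rw [LinearMap.ker_comp, hkerρ, Submodule.comap_smul_top_of_surjective _ _ hφ]
  obtain rfl : ιbar = (LinearMap.ker (ρ ∘ₗ φ)).subtypeQuotSMulTop J :=
    Submodule.linearMap_qext _ (LinearMap.ext hιbar)
  have hcompl := Submodule.isCompl_ker_subtypeQuotSMulTop
    (LinearMap.ker_inf_smul_top_le_smul_ker hφ hN') hK
  exact exists_extension_of_retraction _ (Submodule.projectionOnto _ _ hcompl)
    (Submodule.projectionOnto_apply_left hcompl)
    (Module.isTorsionBySet_quotient_ideal_smul _ J) (Module.isTorsionBySet_quotient_ideal_smul _ J)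

/-- Let `0 → J → B' → B → 0` be a square-zero extension of commutative
rings (`J² = 0`, `B = B'/J`) and `N` a `B`-module.  Tensoring a `B'`-free presentation
`0 → N₁' → F₀ → N → 0` with `B` gives a 4-term exact sequence
`0 → N ⊗_B J → N̄₁' → F̄₀ → N → 0` (whose leftmost term, the kernel `T` of
`N̄₁' → F̄₀`, is naturally `N ⊗_B J`).  If there exists a lifting of `N` along
`q : B' → B` (a `B'`-module `N''` with `N'' ⊗_{B'} B ≅ N` and `Tor₁^{B'}(N'', B) = 0`),
then this 4-term sequence represents the zero class in `Ext²_B(N, N ⊗_B J)`;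
equivalently, the extension `0 → T → N̄₁' → C → 0` (where `C = im(N̄₁' → F̄₀)`) extends
to an extension `0 → T → Z → F̄₀ → 0` of `B`-modules: there are `Z`, `j`, `p`, `g` as
below trivializing the 2-fold extension class. -/
theorem stmt3
    (B' : Type) [CommRing B'] (J : Ideal B') (hJ : J * J = ⊥)
    (N : Type) [AddCommGroup N] [Module B' N] [Module (B' ⧸ J) N]
    [IsScalarTower B' (B' ⧸ J) N]
    (F₀ : Type) [AddCommGroup F₀] [Module B' F₀] [Module.Free B' F₀]
    (ε : F₀ →ₗ[B'] N) (hε : Surjective ε)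
    -- the reduction mod `J` of the inclusion `N₁' = ker ε ⊆ F₀` and of `ε`
    (ιbar : ((LinearMap.ker ε) ⧸ (J • ⊤ : Submodule B' (LinearMap.ker ε))) →ₗ[B']
      (F₀ ⧸ (J • ⊤ : Submodule B' F₀)))
    (hιbar : ∀ x : LinearMap.ker ε,
      ιbar (Submodule.Quotient.mk x) = Submodule.Quotient.mk (x : F₀))
    -- existence of a lifting of `N` along `B' → B' ⧸ J`
    (hlift : ∃ (N'' : Type) (_ : AddCommGroup N'') (_ : Module B' N''),
      Nonempty ((N'' ⊗[B'] (B' ⧸ J)) ≃ₗ[B'] N) ∧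
      Subsingleton (((Tor (ModuleCat B') 1).obj (ModuleCat.of B' N'')).obj
        (ModuleCat.of B' (B' ⧸ J)))) :
    -- the 2-fold extension class `ob(q, N)` vanishes: the extension of `im ιbar` by
    -- `T = ker ιbar` given by `N̄₁'` extends to an extension `Z` of `F̄₀` by `T`,
    -- in the category of `B`-modules
    ∃ (Z : Type) (_ : AddCommGroup Z) (_ : Module B' Z)
      (j : (LinearMap.ker ιbar) →ₗ[B'] Z)
      (p : Z →ₗ[B'] (F₀ ⧸ (J • ⊤ : Submodule B' F₀)))
      (g : ((LinearMap.ker ε) ⧸ (J • ⊤ : Submodule B' (LinearMap.ker ε))) →ₗ[B'] Z),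
      (∀ c ∈ J, ∀ z : Z, c • z = 0) ∧
      Injective j ∧ Surjective p ∧ LinearMap.range j = LinearMap.ker p ∧
      p.comp g = ιbar ∧ g.comp (LinearMap.ker ιbar).subtype = j :=
  stmt3_general B' J hJ N F₀ ε hε ιbar hιbar hlift
end

section
/- Let B' be a commutative ring, J an ideal with J² = 0, B = B'/J, and N a B-module. If α : N' → N is a lifting of N along B' → B, then the set of automorphisms of the lifting (B'-module automorphisms φ of N' with α ∘ φ = α) is canonically isomorphic to Hom_B(N, N ⊗_B J). -/
open TensorProduct Function

/-- Let `B'` be a commutative ring, `J` an ideal with `J² = 0`,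
`B = B'/J`, and `N` a `B`-module.  If `α : N' → N` is a lifting of `N` along `B' → B`
(i.e. `α` is a `B'`-linear surjection such that the natural map
`j : N ⊗_B J → N'`, `j(n ⊗ u) = u • ñ` for any `ñ` with `α(ñ) = n`, is an isomorphism
onto `ker α`), then the automorphisms of the lifting (automorphisms `φ` of `N'` with
`α ∘ φ = α`) are canonically in bijection with `Hom_B(N, N ⊗_B J)`.
(Since `J` kills both `N` and `N ⊗ J`, `B`-linear maps agree with `B'`-linear maps.) -/
theorem stmt4
    (B' : Type) [CommRing B'] (J : Ideal B') (hJ : J * J = ⊥)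
    (N : Type) [AddCommGroup N] [Module B' N] [Module (B' ⧸ J) N]
    [IsScalarTower B' (B' ⧸ J) N]
    (N' : Type) [AddCommGroup N'] [Module B' N']
    (α : N' →ₗ[B'] N) (hα : Surjective α)
    (jmap : (N ⊗[B'] (J : Submodule B' B')) →ₗ[B'] N')
    (hjmap : ∀ (n : N) (u : J) (x : N'), α x = n → jmap (n ⊗ₜ u) = (u : B') • x)
    (hinj : Injective jmap) (hker : LinearMap.range jmap = LinearMap.ker α) :
    Nonempty
      ({φ : N' →ₗ[B'] N' // Bijective φ ∧ α.comp φ = α} ≃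
        (N →ₗ[B'] (N ⊗[B'] (J : Submodule B' B')))) := by
  classical
  -- J kills N
  have hJN : ∀ (u : J) (n : N), (u : B') • n = 0 := by
    intro u n
    have h1 : (u : B') • n = (algebraMap B' (B' ⧸ J) (u : B')) • n :=
      (algebraMap_smul (B' ⧸ J) _ _).symm
    rw [h1, Ideal.Quotient.algebraMap_eq,
      Ideal.Quotient.eq_zero_iff_mem.mpr u.2, zero_smul]
  -- α ∘ jmap = 0
  have hαj : ∀ w, α (jmap w) = 0 := by
    intro w
    induction w using TensorProduct.induction_on with
    | zero => simp
    | tmul n u =>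
      obtain ⟨x, hx⟩ := hα n
      rw [hjmap n u x hx, map_smul, hx, hJN]
    | add a b ha hb => rw [map_add, map_add, ha, hb, add_zero]
  -- the forward direction: f ↦ id + jmap ∘ f ∘ α
  set h : (N →ₗ[B'] (N ⊗[B'] (J : Submodule B' B'))) → (N' →ₗ[B'] N') :=
    fun f => jmap ∘ₗ f ∘ₗ α with hh
  have hcomp : ∀ f x, h f (h f x) = 0 := by
    intro f x; simp [hh, hαj]
  have hFbij : ∀ f, Bijective ((LinearMap.id : N' →ₗ[B'] N') + h f) := by
    intro f
    apply Function.bijective_iff_has_inverse.mpr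
    refine ⟨fun y => y - h f y, fun x => ?_, fun y => ?_⟩
    · show ((LinearMap.id : N' →ₗ[B'] N') + h f) x - h f (((LinearMap.id : N' →ₗ[B'] N') + h f) x) = x
      simp only [LinearMap.add_apply, LinearMap.id_apply, map_add, hcomp]
      abel
    · show (y - h f y) + h f (y - h f y) = y
      simp only [map_sub, hcomp]
      abel
  have hFker : ∀ f, α.comp ((LinearMap.id : N' →ₗ[B'] N') + h f) = α := by
    intro f; ext x; simp [hh, hαj]
  -- reverse direction
  have hmem : ∀ w, jmap w ∈ LinearMap.ker α := fun w => hker ▸ ⟨w, rfl⟩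
  set e : (N ⊗[B'] (J : Submodule B' B')) ≃ₗ[B'] LinearMap.ker α :=
    LinearEquiv.ofBijective (jmap.codRestrict (LinearMap.ker α) hmem)
      ⟨fun a b hab => hinj (congrArg Subtype.val hab),
       fun ⟨z, hz⟩ => by
        obtain ⟨w, hw⟩ := hker ▸ hz
        exact ⟨w, Subtype.ext hw⟩⟩ with he
  have hjsymm : ∀ z : LinearMap.ker α, jmap (e.symm z) = (z : N') := by
    intro z
    exact congrArg Subtype.val (e.apply_symm_apply z)
  -- φ fixes ker α
  have hfix : ∀ (φ : N' →ₗ[B'] N'), α.comp φ = α → ∀ w, φ (jmap w) = jmap w := by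
    intro φ hφ w
    induction w using TensorProduct.induction_on with
    | zero => simp
    | tmul n u =>
      obtain ⟨x, hx⟩ := hα n
      have hφx : α (φ x) = n := by rw [← hx]; exact LinearMap.congr_fun hφ x
      rw [hjmap n u x hx, map_smul, ← hjmap n u (φ x) hφx, hjmap n u x hx]
    | add a b ha hb => rw [map_add, map_add, ha, hb]
  -- construct G
  set qe : (N' ⧸ LinearMap.ker α) ≃ₗ[B'] N := α.quotKerEquivOfSurjective hα with hqe
  have hqemk : ∀ x : N', qe (Submodule.Quotient.mk x) = α x := fun x => rfl
  have hqesymm : ∀ x : N', qe.symm (α x) = Submodule.Quotient.mk x := by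
    intro x
    rw [← hqemk x, LinearEquiv.symm_apply_apply]
  set G : {φ : N' →ₗ[B'] N' // Bijective φ ∧ α.comp φ = α} →
      (N →ₗ[B'] (N ⊗[B'] (J : Submodule B' B'))) :=
    fun φ => e.symm.toLinearMap ∘ₗ
      ((LinearMap.ker α).liftQ
        ((φ.1 - LinearMap.id).codRestrict (LinearMap.ker α)
          (fun x => by
            simp only [LinearMap.mem_ker, LinearMap.sub_apply, LinearMap.id_apply, map_sub]
            rw [show α (φ.1 x) = α x from LinearMap.congr_fun φ.2.2 x, sub_self]))
        (fun x hx => by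
          obtain ⟨w, hw⟩ := hker ▸ hx
          apply Subtype.ext
          simp only [LinearMap.codRestrict_apply, LinearMap.sub_apply, LinearMap.id_apply,
            Submodule.coe_zero]
          rw [← hw, hfix φ.1 φ.2.2 w, sub_self])) ∘ₗ qe.symm.toLinearMap
    with hG
  have hGkey : ∀ (φ : {φ : N' →ₗ[B'] N' // Bijective φ ∧ α.comp φ = α}) (x : N'),
      jmap (G φ (α x)) = φ.1 x - x := by
    intro φ x
    simp only [hG, LinearMap.coe_comp, comp_apply, LinearEquiv.coe_coe]
    rw [hqesymm, Submodule.liftQ_apply, hjsymm]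
    rfl
  refine ⟨⟨fun φ => G φ,
    fun f => ⟨(LinearMap.id : N' →ₗ[B'] N') + h f, hFbij f, hFker f⟩, ?_, ?_⟩⟩
  · intro φ
    apply Subtype.ext
    apply LinearMap.ext
    intro x
    simp only [LinearMap.add_apply, LinearMap.id_apply, hh, LinearMap.coe_comp, comp_apply]
    rw [hGkey φ x]
    abel
  · intro f
    apply LinearMap.ext
    intro n
    apply hinj
    obtain ⟨x, hx⟩ := hα n
    rw [← hx, hGkey]
    simp [hh]
end
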